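/- arXiv:1203.2571 — 2 statements merged into one kernel-verified Lean document; each statement's English description precedes it below -/
import Mathlib

section
/- Let h(χ) = -log σ_k(χ^{-1}) on Γ_n with χ^{-1} the entrywise inverse. Then the matrix with entries h_{ij} + (h_i/χ_j)δ_{ij} is negative semidefinite. -/
open Finset

/-- The `k`-th elementary symmetric polynomial in `n` real variables. -/
noncomputable def esymm (n k : ℕ) (x : Fin n → ℝ) : ℝ :=
  ∑ s ∈ Finset.univ.powersetCard k, ∏ i ∈ s, x i

/-- The `k`-th elementary symmetric polynomial of the variables with the
`i`-th one removed. -/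
noncomputable def esymmOmit (n k : ℕ) (x : Fin n → ℝ) (i : Fin n) : ℝ :=
  ∑ s ∈ (Finset.univ.erase i).powersetCard k, ∏ j ∈ s, x j

/-- The `i`-th partial derivative of a function of `n` real variables. -/
noncomputable def pd (n : ℕ) (g : (Fin n → ℝ) → ℝ) (i : Fin n) (χ : Fin n → ℝ) : ℝ :=
  fderiv ℝ g χ (Pi.single i 1)

/-- The positive orthant `Γ_n`. -/
def Gamma (n : ℕ) : Set (Fin n → ℝ) := {χ | ∀ i, 0 < χ i}

/-!
Write `E = σ_k(χ⁻¹) = ∑_s P_s` with `P_s = ∏_{i ∈ s} χᵢ⁻¹`, and let `A_i`, `B_ij` be the sums of the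
`P_s` over the `s` containing `i`, resp. `i` and `j`. Since `∂_j P_s = -P_s/χ_j` for `j ∈ s`, the
entry `h_ij + (h_i/χ_j)δ_ij` equals `(A_i A_j/E - B_ij)/(E χ_i χ_j)`: the diagonal term cancels the
one coming from differentiating `1/χ_i`. With `u = v/χ` the quadratic form becomes
`((∑_s P_s U_s)²/E - ∑_s P_s U_s²)/E`, where `U_s = ∑_{i ∈ s} u_i`, and this is `≤ 0` by the
Cauchy–Schwarz inequality for the weights `P_s`.
-/

open Finset Filter Topology

theorem sum_mul_sum_filter_mem {ι R : Type*} [Fintype ι] [DecidableEq ι] [CommSemiring R]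
    (S : Finset (Finset ι)) (w : Finset ι → R) (u : ι → R) :
    ∑ i, u i * ∑ s ∈ S with i ∈ s, w s = ∑ s ∈ S, w s * ∑ i ∈ s, u i := by
  simp only [sum_filter, mul_sum, mul_ite, mul_zero]
  rw [sum_comm]
  refine sum_congr rfl fun s _ => ?_
  rw [← sum_filter, filter_mem_eq_inter, univ_inter]
  exact sum_congr rfl fun i _ => mul_comm _ _

theorem isOpen_Gamma (n : ℕ) : IsOpen (Gamma n) := by
  simp only [Gamma, Set.ofPred_forall]
  exact isOpen_iInter_of_finite fun i => isOpen_lt continuous_const (continuous_apply i)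

section PartialDerivative

variable {n : ℕ} {f g : (Fin n → ℝ) → ℝ} {χ : Fin n → ℝ}

theorem pd_congr_of_eventuallyEq (hfg : f =ᶠ[𝓝 χ] g) (i : Fin n) : pd n f i χ = pd n g i χ := by
  rw [pd, pd, hfg.fderiv_eq]

theorem pd_fun_neg (f : (Fin n → ℝ) → ℝ) (i : Fin n) (χ : Fin n → ℝ) :
    pd n (fun x => -f x) i χ = -pd n f i χ := by
  simp [pd, fderiv_fun_neg]

theorem pd_comp {φ : ℝ → ℝ} {φ' : ℝ} (hφ : HasDerivAt φ φ' (f χ)) (hf : DifferentiableAt ℝ f χ)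
    (i : Fin n) : pd n (fun x => φ (f x)) i χ = φ' * pd n f i χ := by
  rw [pd, pd, show (fun x => φ (f x)) = φ ∘ f from rfl,
    (hφ.comp_hasFDerivAt χ hf.hasFDerivAt).fderiv]
  simp

theorem pd_mul (hf : DifferentiableAt ℝ f χ) (hg : DifferentiableAt ℝ g χ) (i : Fin n) :
    pd n (fun x => f x * g x) i χ = pd n f i χ * g χ + f χ * pd n g i χ := by
  rw [pd, pd, pd, fderiv_fun_mul hf hg]
  simp only [add_apply, smul_apply, smul_eq_mul]
  ring

theorem differentiableAt_div (hf : DifferentiableAt ℝ f χ) (hg : DifferentiableAt ℝ g χ)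
    (hgχ : g χ ≠ 0) : DifferentiableAt ℝ (fun x => f x / g x) χ := by
  simpa only [div_eq_mul_inv] using hf.fun_mul (hg.fun_inv hgχ)

theorem pd_div (hf : DifferentiableAt ℝ f χ) (hg : DifferentiableAt ℝ g χ) (hgχ : g χ ≠ 0)
    (i : Fin n) :
    pd n (fun x => f x / g x) i χ = (pd n f i χ * g χ - f χ * pd n g i χ) / g χ ^ 2 := by
  simp only [div_eq_mul_inv]
  rw [pd_mul hf (hg.fun_inv hgχ), pd_comp (hasDerivAt_inv hgχ) hg]
  field_simp
  ring

theorem pd_log (hf : DifferentiableAt ℝ f χ) (hfχ : f χ ≠ 0) (i : Fin n) :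
    pd n (fun x => Real.log (f x)) i χ = pd n f i χ / f χ := by
  rw [pd_comp (Real.hasDerivAt_log hfχ) hf, inv_mul_eq_div]

theorem pd_sum {ι : Type*} {s : Finset ι} {F : ι → (Fin n → ℝ) → ℝ}
    (hF : ∀ a ∈ s, DifferentiableAt ℝ (F a) χ) (i : Fin n) :
    pd n (fun x => ∑ a ∈ s, F a x) i χ = ∑ a ∈ s, pd n (F a) i χ := by
  simp [pd, fderiv_fun_sum hF]

theorem pd_prod {ι : Type*} [DecidableEq ι] {s : Finset ι} {F : ι → (Fin n → ℝ) → ℝ}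
    (hF : ∀ a ∈ s, DifferentiableAt ℝ (F a) χ) (i : Fin n) :
    pd n (fun x => ∏ a ∈ s, F a x) i χ = ∑ a ∈ s, (∏ b ∈ s.erase a, F b χ) * pd n (F a) i χ := by
  simp [pd, fderiv_finsetProd hF]

theorem pd_apply (i j : Fin n) (χ : Fin n → ℝ) :
    pd n (fun x => x i) j χ = if i = j then 1 else 0 := by
  rw [pd, (hasFDerivAt_apply i χ).fderiv]
  simp [Pi.single_apply]

end PartialDerivative

section SumProdInv

variable {n : ℕ}

noncomputable def sumProdInv (S : Finset (Finset (Fin n))) (χ : Fin n → ℝ) : ℝ :=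
  ∑ s ∈ S, ∏ i ∈ s, (χ i)⁻¹

variable {S : Finset (Finset (Fin n))} {χ : Fin n → ℝ}

theorem sumProdInv_pos (hS : S.Nonempty) (hχ : χ ∈ Gamma n) : 0 < sumProdInv S χ :=
  sum_pos (fun _ _ => prod_pos fun i _ => inv_pos.2 (hχ i)) hS

theorem differentiableAt_sumProdInv (hχ : ∀ i, χ i ≠ 0) :
    DifferentiableAt ℝ (sumProdInv S) χ := by
  unfold sumProdInv
  fun_prop (disch := exact hχ _)

theorem pd_prod_inv (hχ : ∀ i, χ i ≠ 0) (s : Finset (Fin n)) (j : Fin n) :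
    pd n (fun x => ∏ i ∈ s, (x i)⁻¹) j χ = if j ∈ s then -((∏ i ∈ s, (χ i)⁻¹) / χ j) else 0 := by
  have hinv : ∀ i, pd n (fun x => (x i)⁻¹) j χ = -(χ i ^ 2)⁻¹ * if i = j then 1 else 0 :=
    fun i => by rw [pd_comp (hasDerivAt_inv (hχ i)) (by fun_prop), pd_apply]
  rw [pd_prod (fun i _ => by fun_prop (disch := exact hχ i))]
  simp only [hinv, mul_ite, mul_one, mul_zero, sum_ite_eq']
  split_ifs with hj
  · rw [← mul_prod_erase s _ hj]
    field_simp [hχ j]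
  · rfl

theorem pd_sumProdInv (hχ : ∀ i, χ i ≠ 0) (j : Fin n) :
    pd n (sumProdInv S) j χ = -(sumProdInv {s ∈ S | j ∈ s} χ / χ j) := by
  rw [show sumProdInv S = fun x => ∑ s ∈ S, ∏ i ∈ s, (x i)⁻¹ from rfl,
    pd_sum (fun s _ => by fun_prop (disch := exact hχ _))]
  simp only [pd_prod_inv hχ, sumProdInv, sum_filter, sum_div, ← sum_neg_distrib]
  exact sum_congr rfl fun s _ => by split_ifs <;> simp

end SumProdInv

section NegLogSumProdInv

variable {n : ℕ} {S : Finset (Finset (Fin n))} {χ : Fin n → ℝ}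

noncomputable def negLogSumProdInv (S : Finset (Finset (Fin n))) (χ : Fin n → ℝ) : ℝ :=
  -Real.log (sumProdInv S χ)

theorem pd_negLogSumProdInv (hS : S.Nonempty) (hχ : χ ∈ Gamma n) (i : Fin n) :
    pd n (negLogSumProdInv S) i χ = sumProdInv {s ∈ S | i ∈ s} χ / χ i / sumProdInv S χ := by
  have hχ₀ : ∀ i, χ i ≠ 0 := fun i => (hχ i).ne'
  rw [show negLogSumProdInv S = fun x => -Real.log (sumProdInv S x) from rfl, pd_fun_neg,
    pd_log (differentiableAt_sumProdInv hχ₀) (sumProdInv_pos hS hχ).ne', pd_sumProdInv hχ₀]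
  ring

theorem pd_pd_negLogSumProdInv_add (hS : S.Nonempty) (hχ : χ ∈ Gamma n) (i j : Fin n) :
    pd n (pd n (negLogSumProdInv S) i) j χ
        + pd n (negLogSumProdInv S) i χ / χ j * (if i = j then 1 else 0)
      = (sumProdInv {s ∈ S | i ∈ s} χ * sumProdInv {s ∈ S | j ∈ s} χ / sumProdInv S χ
          - sumProdInv {s ∈ {s ∈ S | i ∈ s} | j ∈ s} χ) / (sumProdInv S χ * χ i * χ j) := by
  have hχ₀ : ∀ i, χ i ≠ 0 := fun i => (hχ i).ne'
  have hE := (sumProdInv_pos hS hχ).ne'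
  have hev : pd n (negLogSumProdInv S) i
      =ᶠ[𝓝 χ] fun x => sumProdInv {s ∈ S | i ∈ s} x / x i / sumProdInv S x :=
    eventually_of_mem ((isOpen_Gamma n).mem_nhds hχ) fun x hx => pd_negLogSumProdInv hS hx i
  have hA := differentiableAt_sumProdInv (S := {s ∈ S | i ∈ s}) hχ₀
  have hχi : DifferentiableAt ℝ (fun x : Fin n → ℝ => x i) χ := by fun_prop
  rw [pd_congr_of_eventuallyEq hev, pd_div (differentiableAt_div hA hχi (hχ₀ i))
      (differentiableAt_sumProdInv hχ₀) hE, pd_div hA hχi (hχ₀ i), pd_sumProdInv hχ₀,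
    pd_sumProdInv hχ₀, pd_apply, pd_negLogSumProdInv hS hχ]
  have hχi₀ := hχ₀ i
  have hχj₀ := hχ₀ j
  split_ifs with hij
  · subst hij
    field_simp
    ring
  · field_simp
    ring

theorem sq_sum_mul_sumProdInv_filter_le (hχ : χ ∈ Gamma n) (u : Fin n → ℝ) :
    (∑ i, u i * sumProdInv {s ∈ S | i ∈ s} χ) ^ 2
      ≤ sumProdInv S χ * ∑ i, ∑ j, u i * u j * sumProdInv {s ∈ {s ∈ S | i ∈ s} | j ∈ s} χ := by
  have hP : ∀ s ∈ S, 0 ≤ ∏ i ∈ s, (χ i)⁻¹ := fun s _ =>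
    prod_nonneg fun i _ => (inv_pos.2 (hχ i)).le
  have hB : ∑ i, ∑ j, u i * u j * sumProdInv {s ∈ {s ∈ S | i ∈ s} | j ∈ s} χ
      = ∑ s ∈ S, (∏ i ∈ s, (χ i)⁻¹) * (∑ i ∈ s, u i) ^ 2 := by
    simp only [sumProdInv, mul_assoc, ← mul_sum, sum_mul_sum_filter_mem]
    exact sum_congr rfl fun s _ => by ring
  rw [hB]
  simp only [sumProdInv, sum_mul_sum_filter_mem]
  refine sum_sq_le_sum_mul_sum_of_sq_le_mul S hP (fun s hs => mul_nonneg (hP s hs) (sq_nonneg _))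
    fun s _ => le_of_eq (by ring)

theorem sum_sum_pd_pd_negLogSumProdInv_add_mul_nonpos (hS : S.Nonempty) (hχ : χ ∈ Gamma n)
    (v : Fin n → ℝ) :
    ∑ i, ∑ j, (pd n (pd n (negLogSumProdInv S) i) j χ
        + pd n (negLogSumProdInv S) i χ / χ j * (if i = j then 1 else 0)) * v i * v j ≤ 0 := by
  have hE := sumProdInv_pos hS hχ
  set u : Fin n → ℝ := fun i => v i / χ i
  have hform : ∑ i, ∑ j, (pd n (pd n (negLogSumProdInv S) i) j χ
        + pd n (negLogSumProdInv S) i χ / χ j * (if i = j then 1 else 0)) * v i * v j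
      = ((∑ i, u i * sumProdInv {s ∈ S | i ∈ s} χ) ^ 2 / sumProdInv S χ
          - ∑ i, ∑ j, u i * u j * sumProdInv {s ∈ {s ∈ S | i ∈ s} | j ∈ s} χ)
        / sumProdInv S χ := by
    simp only [pd_pd_negLogSumProdInv_add hS hχ, sq, sum_mul_sum, ← sum_sub_distrib, sum_div, u]
    refine sum_congr rfl fun i _ => sum_congr rfl fun j _ => ?_
    have := (hχ i).ne'
    have := (hχ j).ne'
    field_simp
  rw [hform]
  refine div_nonpos_of_nonpos_of_nonneg ?_ hE.le
  rw [sub_nonpos, div_le_iff₀ hE, mul_comm]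
  exact sq_sum_mul_sumProdInv_filter_le hχ u

end NegLogSumProdInv

theorem stmt8_general (n k : ℕ) (hkn : k ≤ n)
    (h : (Fin n → ℝ) → ℝ)
    (hh : h = fun χ => -Real.log (esymm n k (fun i => (χ i)⁻¹))) :
    ∀ χ ∈ Gamma n, ∀ v : Fin n → ℝ,
      ∑ i : Fin n, ∑ j : Fin n,
        (pd n (pd n h i) j χ + (pd n h i χ / χ j) * (if i = j then 1 else 0))
          * v i * v j ≤ 0 := by
  have hS : (univ.powersetCard k : Finset (Finset (Fin n))).Nonempty :=
    powersetCard_nonempty.2 (by simpa using hkn)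
  have hh' : h = negLogSumProdInv (univ.powersetCard k) := hh
  subst hh'
  exact fun χ hχ v => sum_sum_pd_pd_negLogSumProdInv_add_mul_nonpos hS hχ v

/-- For `h(χ) = -log σ_k(χ⁻¹)` on `Γ_n`, the matrix with entries
`h_{ij} + (h_i/χ_j)δ_{ij}` is negative semidefinite. -/
theorem stmt8 (n k : ℕ) (hn : 1 ≤ n) (hk1 : 1 ≤ k) (hkn : k ≤ n)
    (h : (Fin n → ℝ) → ℝ)
    (hh : h = fun χ => -Real.log (esymm n k (fun i => (χ i)⁻¹))) :
    ∀ χ ∈ Gamma n, ∀ v : Fin n → ℝ,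
      ∑ i : Fin n, ∑ j : Fin n,
        (pd n (pd n h i) j χ + (pd n h i χ / χ j) * (if i = j then 1 else 0))
          * v i * v j ≤ 0 :=
  stmt8_general n k hkn h hh
end

section
/- Let f satisfy f' < 0, f'' ≥ 0, f'' + f'/x ≤ 0 on ℝ_{>0}, and ρ(χ) = f(σ_k(χ^{-1})) on Γ_n. Then ρ is concave on Γ_n. -/
open Finset

lemma esymm_pos {n k : ℕ} (hkn : k ≤ n) {x : Fin n → ℝ} (hx : ∀ i, 0 < x i) :
    0 < esymm n k x := by
  apply Finset.sum_pos
  · intro s _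
    exact Finset.prod_pos fun i _ => hx i
  · rw [Finset.powersetCard_nonempty]
    simpa using hkn

/-- Two-exponent Hölder for sums, via weighted AM-GM. -/
lemma sum_rpow_mul_rpow_le {ι : Type*} (s : Finset ι) (u v : ι → ℝ)
    (hu : ∀ i ∈ s, 0 ≤ u i) (hv : ∀ i ∈ s, 0 ≤ v i)
    {a b : ℝ} (ha : 0 < a) (hb : 0 < b) (hab : a + b = 1) :
    ∑ i ∈ s, (u i) ^ a * (v i) ^ b ≤ (∑ i ∈ s, u i) ^ a * (∑ i ∈ s, v i) ^ b := by
  rcases eq_or_lt_of_le (Finset.sum_nonneg hu) with hU | hU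
  · have hz : ∀ i ∈ s, u i = 0 := (Finset.sum_eq_zero_iff_of_nonneg hu).1 hU.symm
    have hL : ∑ i ∈ s, (u i) ^ a * (v i) ^ b = 0 :=
      Finset.sum_eq_zero fun i hi => by rw [hz i hi, Real.zero_rpow ha.ne', zero_mul]
    rw [hL, ← hU, Real.zero_rpow ha.ne', zero_mul]
  rcases eq_or_lt_of_le (Finset.sum_nonneg hv) with hV | hV
  · have hz : ∀ i ∈ s, v i = 0 := (Finset.sum_eq_zero_iff_of_nonneg hv).1 hV.symm
    have hL : ∑ i ∈ s, (u i) ^ a * (v i) ^ b = 0 :=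
      Finset.sum_eq_zero fun i hi => by rw [hz i hi, Real.zero_rpow hb.ne', mul_zero]
    rw [hL, ← hV, Real.zero_rpow hb.ne', mul_zero]
  set U := ∑ i ∈ s, u i with hUdef
  set V := ∑ i ∈ s, v i with hVdef
  have key : ∀ i ∈ s, (u i) ^ a * (v i) ^ b ≤ (a * (u i / U) + b * (v i / V)) * (U ^ a * V ^ b) := by
    intro i hi
    have h1 : (u i / U) ^ a * (v i / V) ^ b ≤ a * (u i / U) + b * (v i / V) :=
      Real.geom_mean_le_arith_mean2_weighted ha.le hb.le
        (div_nonneg (hu i hi) hU.le) (div_nonneg (hv i hi) hV.le) hab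
    have h2 : (u i) ^ a * (v i) ^ b = ((u i / U) ^ a * (v i / V) ^ b) * (U ^ a * V ^ b) := by
      rw [Real.div_rpow (hu i hi) hU.le, Real.div_rpow (hv i hi) hV.le]
      have hUa : (0:ℝ) < U ^ a := Real.rpow_pos_of_pos hU a
      have hVb : (0:ℝ) < V ^ b := Real.rpow_pos_of_pos hV b
      field_simp
    rw [h2]
    exact mul_le_mul_of_nonneg_right h1 (by positivity)
  calc ∑ i ∈ s, (u i) ^ a * (v i) ^ b
      ≤ ∑ i ∈ s, (a * (u i / U) + b * (v i / V)) * (U ^ a * V ^ b) := Finset.sum_le_sum key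
    _ = (a * (U / U) + b * (V / V)) * (U ^ a * V ^ b) := by
        rw [← Finset.sum_mul]
        congr 1
        rw [Finset.sum_add_distrib, ← Finset.mul_sum, ← Finset.mul_sum,
          ← Finset.sum_div, ← Finset.sum_div]
    _ = U ^ a * V ^ b := by
        rw [div_self hU.ne', div_self hV.ne', mul_one, mul_one, hab, one_mul]

/-- Log-convexity of `σ_k(χ⁻¹)` on the positive orthant (two-point form). -/
lemma esymm_inv_logconvex {n k : ℕ} {χ ψ : Fin n → ℝ} (hχ : ∀ i, 0 < χ i)
    (hψ : ∀ i, 0 < ψ i) {a b : ℝ} (ha : 0 < a) (hb : 0 < b) (hab : a + b = 1) :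
    esymm n k (fun i => (a * χ i + b * ψ i)⁻¹) ≤
      (esymm n k fun i => (χ i)⁻¹) ^ a * (esymm n k fun i => (ψ i)⁻¹) ^ b := by
  unfold esymm
  calc ∑ s ∈ Finset.univ.powersetCard k, ∏ i ∈ s, (a * χ i + b * ψ i)⁻¹
      ≤ ∑ s ∈ Finset.univ.powersetCard k,
          (∏ i ∈ s, (χ i)⁻¹) ^ a * (∏ i ∈ s, (ψ i)⁻¹) ^ b := by
        apply Finset.sum_le_sum
        intro s _
        calc ∏ i ∈ s, (a * χ i + b * ψ i)⁻¹
            ≤ ∏ i ∈ s, ((χ i)⁻¹) ^ a * ((ψ i)⁻¹) ^ b := by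
              apply Finset.prod_le_prod
              · intro i _
                have := hχ i; have := hψ i
                positivity
              · intro i _
                have h1 : (χ i) ^ a * (ψ i) ^ b ≤ a * χ i + b * ψ i :=
                  Real.geom_mean_le_arith_mean2_weighted ha.le hb.le (hχ i).le (hψ i).le hab
                have h2 : (0:ℝ) < (χ i) ^ a * (ψ i) ^ b := by
                  have := hχ i; have := hψ i
                  positivity
                rw [Real.inv_rpow (hχ i).le, Real.inv_rpow (hψ i).le, ← mul_inv]
                exact inv_anti₀ h2 h1
          _ = (∏ i ∈ s, (χ i)⁻¹) ^ a * (∏ i ∈ s, (ψ i)⁻¹) ^ b := by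
              rw [Finset.prod_mul_distrib,
                Real.finset_prod_rpow _ _ (fun i _ => inv_nonneg.2 (hχ i).le),
                Real.finset_prod_rpow _ _ (fun i _ => inv_nonneg.2 (hψ i).le)]
    _ ≤ (∑ s ∈ Finset.univ.powersetCard k, ∏ i ∈ s, (χ i)⁻¹) ^ a *
          (∑ s ∈ Finset.univ.powersetCard k, ∏ i ∈ s, (ψ i)⁻¹) ^ b := by
        apply sum_rpow_mul_rpow_le
        · intro s _
          exact Finset.prod_nonneg fun i _ => inv_nonneg.2 (hχ i).le
        · intro s _
          exact Finset.prod_nonneg fun i _ => inv_nonneg.2 (hψ i).le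
        · exact ha
        · exact hb
        · exact hab

/-- `t ↦ f (exp t)` is concave under the given differential hypotheses. -/
lemma concave_f_exp (f : ℝ → ℝ) (hf : ContDiffOn ℝ (⊤ : ℕ∞) f (Set.Ioi 0))
    (hf3 : ∀ x : ℝ, 0 < x → deriv (deriv f) x + deriv f x / x ≤ 0) :
    ConcaveOn ℝ Set.univ (fun t => f (Real.exp t)) := by
  have hd : ∀ x : ℝ, 0 < x → DifferentiableAt ℝ f x := fun x hx =>
    (hf.contDiffAt (isOpen_Ioi.mem_nhds hx)).differentiableAt (by simp)
  have hf' : ContDiffOn ℝ (⊤ : ℕ∞) (deriv f) (Set.Ioi 0) := hf.deriv_of_isOpen isOpen_Ioi (by simp)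
  have hd' : ∀ x : ℝ, 0 < x → DifferentiableAt ℝ (deriv f) x := fun x hx =>
    (hf'.contDiffAt (isOpen_Ioi.mem_nhds hx)).differentiableAt (by simp)
  have h1 : ∀ t : ℝ, HasDerivAt (fun t => f (Real.exp t))
      (deriv f (Real.exp t) * Real.exp t) t := fun t =>
    HasDerivAt.comp t (hd _ (Real.exp_pos t)).hasDerivAt (Real.hasDerivAt_exp t)
  have h2 : ∀ t : ℝ, HasDerivAt (fun t => deriv f (Real.exp t) * Real.exp t)
      (deriv (deriv f) (Real.exp t) * Real.exp t * Real.exp t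
        + deriv f (Real.exp t) * Real.exp t) t := fun t =>
    (HasDerivAt.comp t (hd' _ (Real.exp_pos t)).hasDerivAt (Real.hasDerivAt_exp t)).mul
      (Real.hasDerivAt_exp t)
  apply concaveOn_of_hasDerivWithinAt2_nonpos convex_univ
    (f' := fun t => deriv f (Real.exp t) * Real.exp t)
    (f'' := fun t => deriv (deriv f) (Real.exp t) * Real.exp t * Real.exp t
        + deriv f (Real.exp t) * Real.exp t)
  · exact fun t _ => (h1 t).continuousAt.continuousWithinAt
  · exact fun t _ => (h1 t).hasDerivWithinAt
  · exact fun t _ => (h2 t).hasDerivWithinAt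
  · intro t _
    set x := Real.exp t with hxdef
    have hx : 0 < x := Real.exp_pos t
    have h3 := hf3 x hx
    have h4 : deriv (deriv f) x * x * x + deriv f x * x
        = (deriv (deriv f) x + deriv f x / x) * (x * x) := by
      field_simp
    rw [h4]
    exact mul_nonpos_of_nonpos_of_nonneg h3 (by positivity)

/-- If `f' < 0`, `f'' ≥ 0` and `f'' + f'/x ≤ 0` on `ℝ_{>0}`, then
`ρ(χ) = f(σ_k(χ⁻¹))` is concave on `Γ_n`. -/
theorem stmt13 (n k : ℕ) (hn : 1 ≤ n) (hk1 : 1 ≤ k) (hkn : k ≤ n)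
    (f : ℝ → ℝ) (hf : ContDiffOn ℝ (⊤ : ℕ∞) f (Set.Ioi 0))
    (hf1 : ∀ x : ℝ, 0 < x → deriv f x < 0)
    (hf2 : ∀ x : ℝ, 0 < x → 0 ≤ deriv (deriv f) x)
    (hf3 : ∀ x : ℝ, 0 < x → deriv (deriv f) x + deriv f x / x ≤ 0) :
    ConcaveOn ℝ (Gamma n)
      (fun χ => f (esymm n k (fun i => (χ i)⁻¹))) := by
  have hAnti : StrictAntiOn f (Set.Ioi 0) := by
    apply strictAntiOn_of_deriv_neg (convex_Ioi 0) hf.continuousOn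
    intro x hx
    rw [interior_Ioi] at hx
    exact hf1 x hx
  have hConc : ConcaveOn ℝ Set.univ (fun t => f (Real.exp t)) := concave_f_exp f hf hf3
  constructor
  · have hG : Gamma n = Set.pi Set.univ (fun _ : Fin n => Set.Ioi (0:ℝ)) := by
      ext χ; simp [Gamma]
    rw [hG]
    exact convex_pi fun i _ => convex_Ioi 0
  · intro χ hχ ψ hψ a b ha hb hab
    dsimp only
    rcases eq_or_lt_of_le ha with h | ha'
    · have hb1 : b = 1 := by linarith
      subst hb1
      simp [← h]
    rcases eq_or_lt_of_le hb with h | hb'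
    · have ha1 : a = 1 := by linarith
      subst ha1
      simp [← h]
    have hχ' : ∀ i, 0 < χ i := hχ
    have hψ' : ∀ i, 0 < ψ i := hψ
    set u := esymm n k (fun i => (χ i)⁻¹) with hu
    set v := esymm n k (fun i => (ψ i)⁻¹) with hv
    have hupos : 0 < u := esymm_pos hkn fun i => inv_pos.2 (hχ' i)
    have hvpos : 0 < v := esymm_pos hkn fun i => inv_pos.2 (hψ' i)
    have hmem : ∀ i, 0 < (a • χ + b • ψ) i := fun i => by
      simp only [Pi.add_apply, Pi.smul_apply, smul_eq_mul]
      exact add_pos (mul_pos ha' (hχ' i)) (mul_pos hb' (hψ' i))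
    set w := esymm n k (fun i => ((a • χ + b • ψ) i)⁻¹) with hw
    have hwpos : 0 < w := esymm_pos hkn fun i => inv_pos.2 (hmem i)
    have hle : w ≤ u ^ a * v ^ b := by
      rw [hw, hu, hv]
      simp only [Pi.add_apply, Pi.smul_apply, smul_eq_mul]
      exact esymm_inv_logconvex hχ' hψ' ha' hb' hab
    have step1 : f (u ^ a * v ^ b) ≤ f w := by
      rcases eq_or_lt_of_le hle with h | h
      · rw [h]
      · exact (hAnti (Set.mem_Ioi.2 hwpos)
          (Set.mem_Ioi.2 (by positivity)) h).le
    have step2 : a * f u + b * f v ≤ f (u ^ a * v ^ b) := by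
      have h2 := hConc.2 (Set.mem_univ (Real.log u)) (Set.mem_univ (Real.log v)) ha hb hab
      simp only [smul_eq_mul, Real.exp_log hupos, Real.exp_log hvpos] at h2
      have hexp : Real.exp (a * Real.log u + b * Real.log v) = u ^ a * v ^ b := by
        rw [Real.exp_add, Real.rpow_def_of_pos hupos, Real.rpow_def_of_pos hvpos,
          mul_comm (Real.log u) a, mul_comm (Real.log v) b]
      rwa [hexp] at h2
    simp only [smul_eq_mul]
    linarith
end
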